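/- arXiv:1304.5973 — 3 statements merged into one kernel-verified Lean document; each statement's English description precedes it below -/
import Mathlib

section
/- The half-ID labeling of the d-dimensional hypercube, where L(v) contains all vertices agreeing with v on the first ⌊d/2⌋ coordinates together with all vertices agreeing with v on the last ⌈d/2⌉ coordinates, satisfies the cover property: for any vertices s, t, the vertex u whose first ⌊d/2⌋ coordinates equal those of t and whose last ⌈d/2⌉ coordinates equal those of s lies in L(s) ∩ L(t) and on a shortest s–t path. -/
/-- Cover property of the half-ID labeling: the vertex `u` taking `t`'s first
`⌊d/2⌋` coordinates and `s`'s last `⌈d/2⌉` coordinates belongs to `L(s)` and to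
`L(t)` (it agrees with `s` on one half and with `t` on the other half), and it
lies on a shortest `s`–`t` path. -/
theorem stmt4 (d : ℕ) (s t : Fin d → Bool) :
    ((∀ i : Fin d, (i : ℕ) < d / 2 → (fun j : Fin d => if (j : ℕ) < d / 2 then t j else s j) i = s i) ∨
     (∀ i : Fin d, d / 2 ≤ (i : ℕ) → (fun j : Fin d => if (j : ℕ) < d / 2 then t j else s j) i = s i)) ∧
    ((∀ i : Fin d, (i : ℕ) < d / 2 → (fun j : Fin d => if (j : ℕ) < d / 2 then t j else s j) i = t i) ∨
     (∀ i : Fin d, d / 2 ≤ (i : ℕ) → (fun j : Fin d => if (j : ℕ) < d / 2 then t j else s j) i = t i)) ∧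
    hammingDist s (fun j : Fin d => if (j : ℕ) < d / 2 then t j else s j) +
      hammingDist (fun j : Fin d => if (j : ℕ) < d / 2 then t j else s j) t
        = hammingDist s t := by
  refine ⟨Or.inr fun i hi => by simp [Nat.not_lt.mpr hi],
          Or.inl fun i hi => by simp [hi], ?_⟩
  have h1 : hammingDist s (fun j : Fin d => if (j : ℕ) < d / 2 then t j else s j)
      = (Finset.filter (fun i : Fin d => (i : ℕ) < d / 2)
          (Finset.filter (fun i : Fin d => s i ≠ t i) Finset.univ)).card := by
    rw [hammingDist, Finset.filter_filter]
    congr 1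
    ext i
    by_cases h : (i : ℕ) < d / 2 <;> simp [h, ne_comm, and_comm]
  have h2 : hammingDist (fun j : Fin d => if (j : ℕ) < d / 2 then t j else s j) t
      = (Finset.filter (fun i : Fin d => ¬ (i : ℕ) < d / 2)
          (Finset.filter (fun i : Fin d => s i ≠ t i) Finset.univ)).card := by
    rw [hammingDist, Finset.filter_filter]
    congr 1
    ext i
    by_cases h : (i : ℕ) < d / 2 <;> simp [h, and_comm]
  rw [h1, h2, Finset.card_filter_add_card_filter_not, hammingDist]
end

section
/- Let G be a finite bipartite graph with parts of sizes X and Y, such that every vertex on the left side has degree x (so G has x·X edges). Then for any nonempty subsets of X' left vertices and Y' right vertices, the number of edges of G with both endpoints in the chosen subsets, divided by X' + Y', is at most x·X/(X+Y). -/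
open Finset

lemma count_auxL {L R : Type*} (A : L → R → Prop) [∀ l r, Decidable (A l r)]
    (S : Finset L) (T : Finset R) :
    ((S ×ˢ T).filter fun p : L × R => A p.1 p.2).card
      = ∑ l ∈ S, (T.filter fun r => A l r).card := by
  rw [Finset.card_filter, Finset.sum_product]
  exact Finset.sum_congr rfl fun l _ => (Finset.card_filter _ _).symm

lemma count_auxR {L R : Type*} (A : L → R → Prop) [∀ l r, Decidable (A l r)]
    (S : Finset L) (T : Finset R) :
    ((S ×ˢ T).filter fun p : L × R => A p.1 p.2).card
      = ∑ r ∈ T, (S.filter fun l => A l r).card := by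
  rw [Finset.card_filter, Finset.sum_product_right]
  exact Finset.sum_congr rfl fun r _ => (Finset.card_filter _ _).symm

/-- In a finite biregular bipartite graph (left degrees all `x`, right degrees
all equal), the density of any subgraph induced by nonempty subsets of the two
sides is at most the density `x·X/(X+Y)` of the whole graph. -/
theorem stmt7 {L R : Type*} [Fintype L] [Fintype R]
    (A : L → R → Prop) [∀ l r, Decidable (A l r)] (x y : ℕ)
    (hleft : ∀ l : L, (univ.filter fun r => A l r).card = x)
    (hright : ∀ r : R, (univ.filter fun l => A l r).card = y)
    (S : Finset L) (T : Finset R) (hS : S.Nonempty) (hT : T.Nonempty) :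
    (((S ×ˢ T).filter fun p : L × R => A p.1 p.2).card : ℝ) / ((S.card : ℝ) + T.card)
      ≤ (x : ℝ) * (Fintype.card L) / ((Fintype.card L : ℝ) + Fintype.card R) := by
  set E := ((S ×ˢ T).filter fun p : L × R => A p.1 p.2).card with hE
  have hE1 : E ≤ x * S.card := by
    rw [hE, count_auxL]
    calc ∑ l ∈ S, (T.filter fun r => A l r).card
        ≤ ∑ l ∈ S, (univ.filter fun r => A l r).card :=
          Finset.sum_le_sum fun l _ => Finset.card_le_card
            (Finset.filter_subset_filter _ (Finset.subset_univ T))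
      _ = x * S.card := by simp [hleft, mul_comm]
  have hE2 : E ≤ y * T.card := by
    rw [hE, count_auxR]
    calc ∑ r ∈ T, (S.filter fun l => A l r).card
        ≤ ∑ r ∈ T, (univ.filter fun l => A l r).card :=
          Finset.sum_le_sum fun r _ => Finset.card_le_card
            (Finset.filter_subset_filter _ (Finset.subset_univ S))
      _ = y * T.card := by simp [hright, mul_comm]
  have hxy : x * Fintype.card L = y * Fintype.card R := by
    have h1 := count_auxL A (univ : Finset L) (univ : Finset R)
    have h2 := count_auxR A (univ : Finset L) (univ : Finset R)
    rw [h2] at h1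
    simpa [hleft, hright, mul_comm] using h1.symm
  -- nat inequality
  have hnat : E * (Fintype.card L + Fintype.card R)
      ≤ x * Fintype.card L * (S.card + T.card) := by
    have h1 : E * Fintype.card L ≤ x * S.card * Fintype.card L :=
      Nat.mul_le_mul_right _ hE1
    have h2 : E * Fintype.card R ≤ y * T.card * Fintype.card R :=
      Nat.mul_le_mul_right _ hE2
    have h3 : y * T.card * Fintype.card R = x * Fintype.card L * T.card := by
      calc y * T.card * Fintype.card R = y * Fintype.card R * T.card := by ring
        _ = x * Fintype.card L * T.card := by rw [hxy]
    nlinarith [h1, h2, h3]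
  have hL : 0 < Fintype.card L := Fintype.card_pos_iff.2 ⟨hS.choose⟩
  have hR : 0 < Fintype.card R := Fintype.card_pos_iff.2 ⟨hT.choose⟩
  have hST : (0:ℝ) < S.card + T.card := by
    have := hS.card_pos; have := hT.card_pos; positivity
  have hLR : (0:ℝ) < (Fintype.card L : ℝ) + Fintype.card R := by positivity
  rw [div_le_div_iff₀ hST hLR]
  have hcast : (E : ℝ) * ((Fintype.card L : ℝ) + Fintype.card R)
      ≤ (x : ℝ) * (Fintype.card L) * ((S.card : ℝ) + T.card) := by
    exact_mod_cast hnat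
  nlinarith [hcast]
end

section
/- For fixed natural numbers d and k with k ≤ d, the function f(x) = (binomial(d,x) + binomial(d,k−x)) / (binomial(d,x)·binomial(d−x,k−x)), defined for integers 0 ≤ x ≤ k, attains its minimum at x = ⌊k/2⌋ (equivalently at x = ⌈k/2⌉, where it takes the same value). -/
/-!
Since `C(d,x) * C(d-x,k-x) = C(d,k) * C(k,x)`, the function equals `(h x + h (k - x)) / C(d,k)`
with `h x = C(d,x) / C(k,x)`. The increments `h (x+1) - h x = h x * (d-k) / (k-x)` are
nonnegative and grow with `x`, so `h` is discretely convex, and the symmetrisation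
`x ↦ h x + h (k - x)` of a convex function is smallest at the middle `x = ⌊k/2⌋`.
-/

section ConvexSymmetrization

variable {α : Type*} [AddCommGroup α] [LinearOrder α] [IsOrderedAddMonoid α]
  {h : ℕ → α} {k x : ℕ}

theorem apply_succ_add_apply_sub_succ_le (hh : MonotoneOn (fun n ↦ h (n + 1) - h n) (Set.Iio k))
    (hx : x + 1 ≤ k - x) : h (x + 1) + h (k - (x + 1)) ≤ h x + h (k - x) := by
  have hinc : h (x + 1) - h x ≤ h (k - (x + 1) + 1) - h (k - (x + 1)) :=
    hh (show x < k by omega) (show k - (x + 1) < k by omega) (by omega)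
  rw [show k - (x + 1) + 1 = k - x by omega, sub_le_sub_iff] at hinc
  rwa [add_comm (h x)]

theorem apply_half_add_apply_sub_half_le (hh : MonotoneOn (fun n ↦ h (n + 1) - h n) (Set.Iio k))
    (hx : x ≤ k) : h (k / 2) + h (k - k / 2) ≤ h x + h (k - x) := by
  have hanti : AntitoneOn (fun n ↦ h n + h (k - n)) (Set.Iic (k / 2)) :=
    antitoneOn_of_succ_le Set.ordConnected_Iic fun n _ _ hn ↦
      apply_succ_add_apply_sub_succ_le hh (by simp only [Set.mem_Iic, Nat.succ_eq_succ] at hn; omega)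
  rcases le_or_gt x (k / 2) with hxk | hxk
  · exact hanti (Set.mem_Iic.2 hxk) Set.self_mem_Iic hxk
  · calc h (k / 2) + h (k - k / 2) ≤ h (k - x) + h (k - (k - x)) :=
          hanti (Set.mem_Iic.2 (by omega)) Set.self_mem_Iic (by omega)
      _ = h x + h (k - x) := by rw [Nat.sub_sub_self hx, add_comm]

end ConvexSymmetrization

def chooseRatio (d k x : ℕ) : ℚ := d.choose x / k.choose x

section ChooseRatio

variable {d k x : ℕ}

theorem chooseRatio_nonneg : 0 ≤ chooseRatio d k x := by
  unfold chooseRatio; positivity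

theorem chooseRatio_succ :
    chooseRatio d k (x + 1) = chooseRatio d k x * (d - x : ℕ) / (k - x : ℕ) := by
  have hsucc (n : ℕ) : (n.choose (x + 1) : ℚ) = n.choose x * (n - x : ℕ) / (x + 1) := by
    rw [eq_div_iff (by positivity)]
    exact_mod_cast Nat.choose_succ_right_eq n x
  rw [chooseRatio, hsucc, hsucc, div_div_div_cancel_right₀ (by positivity), mul_div_mul_comm,
    chooseRatio, mul_div_assoc]

theorem chooseRatio_succ_sub (hkd : k ≤ d) (hx : x < k) :
    chooseRatio d k (x + 1) - chooseRatio d k x =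
      chooseRatio d k x * ((d : ℚ) - k) / ((k : ℚ) - x) := by
  have hkx : (k : ℚ) - x ≠ 0 := sub_ne_zero.2 (by exact_mod_cast hx.ne')
  rw [chooseRatio_succ, Nat.cast_sub (by omega), Nat.cast_sub hx.le]
  field_simp
  ring

theorem chooseRatio_monotoneOn (hkd : k ≤ d) : MonotoneOn (chooseRatio d k) (Set.Iic k) :=
  monotoneOn_of_le_succ Set.ordConnected_Iic fun n _ _ hn ↦ by
    simp only [Set.mem_Iic, Nat.succ_eq_succ] at hn ⊢
    rw [← sub_nonneg, chooseRatio_succ_sub hkd hn]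
    have hnk : (n : ℚ) < k := by exact_mod_cast hn
    exact div_nonneg (mul_nonneg chooseRatio_nonneg (sub_nonneg.2 (by exact_mod_cast hkd)))
      (sub_nonneg.2 hnk.le)

theorem chooseRatio_increment_monotoneOn (hkd : k ≤ d) :
    MonotoneOn (fun n ↦ chooseRatio d k (n + 1) - chooseRatio d k n) (Set.Iio k) := by
  intro a ha b hb hab
  simp only [Set.mem_Iio] at ha hb ⊢
  rw [chooseRatio_succ_sub hkd ha, chooseRatio_succ_sub hkd hb]
  have hkb : (0 : ℚ) < k - b := sub_pos.2 (by exact_mod_cast hb)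
  have hdk : (0 : ℚ) ≤ d - k := sub_nonneg.2 (by exact_mod_cast hkd)
  have hmono := chooseRatio_monotoneOn hkd (Set.mem_Iic.2 ha.le) (Set.mem_Iic.2 hb.le) hab
  gcongr
  exact mul_nonneg chooseRatio_nonneg hdk

theorem choose_add_choose_div_eq_chooseRatio (hx : x ≤ k) :
    (d.choose x + d.choose (k - x) : ℚ) / ((d.choose x : ℚ) * (d - x).choose (k - x)) =
      (chooseRatio d k x + chooseRatio d k (k - x)) / d.choose k := by
  rw [chooseRatio, chooseRatio, Nat.choose_symm hx, ← add_div, div_div, ← Nat.cast_mul,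
    ← Nat.cast_mul, mul_comm (k.choose x), Nat.choose_mul hx]

end ChooseRatio

/-- The function `f(x) = (C(d,x) + C(d,k−x)) / (C(d,x)·C(d−x,k−x))` on
`0 ≤ x ≤ k` attains its minimum at `x = ⌊k/2⌋`, and takes the same value at
`x = ⌈k/2⌉`. -/
theorem stmt10 (d k : ℕ) (hkd : k ≤ d) :
    (∀ x : ℕ, x ≤ k →
      ((d.choose (k / 2) + d.choose (k - k / 2) : ℚ)) /
          ((d.choose (k / 2) : ℚ) * (d - k / 2).choose (k - k / 2))
        ≤ ((d.choose x + d.choose (k - x) : ℚ)) /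
            ((d.choose x : ℚ) * (d - x).choose (k - x))) ∧
    ((d.choose (k / 2) + d.choose (k - k / 2) : ℚ)) /
        ((d.choose (k / 2) : ℚ) * (d - k / 2).choose (k - k / 2))
      = ((d.choose ((k + 1) / 2) + d.choose (k - (k + 1) / 2) : ℚ)) /
          ((d.choose ((k + 1) / 2) : ℚ) * (d - (k + 1) / 2).choose (k - (k + 1) / 2)) := by
  have hhalf : k / 2 ≤ k := Nat.div_le_self k 2
  rw [choose_add_choose_div_eq_chooseRatio hhalf]
  constructor
  · intro x hx
    rw [choose_add_choose_div_eq_chooseRatio hx]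
    gcongr ?_ / _
    exact apply_half_add_apply_sub_half_le (chooseRatio_increment_monotoneOn hkd) hx
  · rw [show (k + 1) / 2 = k - k / 2 by omega,
      choose_add_choose_div_eq_chooseRatio (Nat.sub_le k _), Nat.sub_sub_self hhalf, add_comm]
end
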